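/- Let L₊ be the Laplacian of a connected positively weighted graph on n vertices and let e = (e_i − e_j) for distinct vertices i, j, with r = e^T L₊^† e the effective resistance between i and j. Then for w > 0, the signed Laplacian L₊ − w e e^T is positive semidefinite if and only if w ≤ 1/r. -/

import Mathlib

open Matrix

/-- `Lp` satisfies the four Penrose conditions for `L`, i.e. `Lp = L†`. -/
def IsMoorePenrose {n : ℕ} (L Lp : Matrix (Fin n) (Fin n) ℝ) : Prop :=
  L * Lp * L = L ∧ Lp * L * Lp = Lp ∧ (L * Lp)ᵀ = L * Lp ∧ (Lp * L)ᵀ = Lp * L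

/-! With `y = L₊† e` one has `L₊ y = e`, because `e` is orthogonal to `ker L₊ ⊆ span 𝟙`, and
`r = yᵀ L₊ y > 0`. Since `eᵀ x = yᵀ L₊ x`, the quadratic form of `L₊ − w e eᵀ` is
`xᵀ L₊ x − w (yᵀ L₊ x)²`. At `x = y` it equals `r (1 − w r)`; conversely, by Cauchy–Schwarz for the
semi-inner product `L₊`, `(yᵀ L₊ x)² ≤ r · xᵀ L₊ x`, so the form is nonnegative once `w r ≤ 1`. -/

namespace Matrix

variable {ι : Type*} [Fintype ι]

lemma PosSemidef.dotProduct_mulVec_sq_le {L : Matrix ι ι ℝ} (hL : L.PosSemidef) (x y : ι → ℝ) :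
    (x ⬝ᵥ L *ᵥ y) ^ 2 ≤ (x ⬝ᵥ L *ᵥ x) * (y ⬝ᵥ L *ᵥ y) := by
  classical
  have hsymm : LinearMap.IsSymm L.toBilin' :=
    ⟨(isSymm_toBilin'_iff_isSymm.mpr hL.isHermitian).eq⟩
  have hnonneg (z : ι → ℝ) : 0 ≤ L.toBilin' z z := by
    simpa [toBilin'_apply'] using hL.dotProduct_mulVec_nonneg z
  simpa only [toBilin'_apply'] using L.toBilin'.apply_sq_le_of_symm hnonneg hsymm x y

lemma PosSemidef.dotProduct_mulVec_pos {L : Matrix ι ι ℝ} (hL : L.PosSemidef) {y : ι → ℝ}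
    (hy : L *ᵥ y ≠ 0) : 0 < y ⬝ᵥ L *ᵥ y := by
  refine lt_of_le_of_ne (by simpa using hL.dotProduct_mulVec_nonneg y) fun h ↦ hy ?_
  simpa using (hL.dotProduct_mulVec_zero_iff y).mp (by simpa using h.symm)

lemma dotProduct_sub_smul_vecMulVec_mulVec {R : Type*} [CommRing R] (L : Matrix ι ι R)
    (w : R) (e x : ι → R) :
    x ⬝ᵥ (L - w • vecMulVec e e) *ᵥ x = x ⬝ᵥ L *ᵥ x - w * (e ⬝ᵥ x) ^ 2 := by
  rw [sub_mulVec, dotProduct_sub, smul_mulVec, vecMulVec_mulVec, dotProduct_smul,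
    dotProduct_smul, dotProduct_comm x e]
  simp only [MulOpposite.smul_eq_mul_unop, MulOpposite.unop_op, smul_eq_mul]
  ring

theorem PosSemidef.sub_smul_vecMulVec_mulVec_iff {L : Matrix ι ι ℝ} (hL : L.PosSemidef)
    {y : ι → ℝ} (hy : L *ᵥ y ≠ 0) (w : ℝ) :
    (L - w • vecMulVec (L *ᵥ y) (L *ᵥ y)).PosSemidef ↔ w ≤ 1 / (y ⬝ᵥ L *ᵥ y) := by
  set r := y ⬝ᵥ L *ᵥ y
  have hr : 0 < r := hL.dotProduct_mulVec_pos hy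
  have hLt : Lᵀ = L := hL.isHermitian
  have hform (x : ι → ℝ) :
      x ⬝ᵥ (L - w • vecMulVec (L *ᵥ y) (L *ᵥ y)) *ᵥ x = x ⬝ᵥ L *ᵥ x - w * (y ⬝ᵥ L *ᵥ x) ^ 2 := by
    rw [dotProduct_sub_smul_vecMulVec_mulVec, dotProduct_mulVec y, ← mulVec_transpose, hLt]
  rw [le_div_iff₀ hr]
  constructor
  · intro hpsd
    have := hpsd.dotProduct_mulVec_nonneg y
    rw [star_trivial, hform] at this
    nlinarith
  · intro hwr
    have hherm : (vecMulVec (L *ᵥ y) (L *ᵥ y)).IsHermitian := by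
      simpa using (posSemidef_vecMulVec_self_star (L *ᵥ y)).isHermitian
    refine .of_dotProduct_mulVec_nonneg (hL.isHermitian.sub (hherm.smul (IsSelfAdjoint.all w)))
      fun x ↦ ?_
    rw [star_trivial, hform]
    have hcs := hL.dotProduct_mulVec_sq_le y x
    have hx : 0 ≤ x ⬝ᵥ L *ᵥ x := by simpa using hL.dotProduct_mulVec_nonneg x
    rcases le_total w 0 with hw | hw
    · nlinarith [sq_nonneg (y ⬝ᵥ L *ᵥ x)]
    · nlinarith [mul_le_mul_of_nonneg_left hcs hw]

end Matrix

lemma IsMoorePenrose.mulVec_mulVec_eq_of_orthogonal_ker {n : ℕ} {L Lp : Matrix (Fin n) (Fin n) ℝ}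
    (h : IsMoorePenrose L Lp) (hL : Lᵀ = L) {x : Fin n → ℝ}
    (hx : ∀ z, L *ᵥ z = 0 → x ⬝ᵥ z = 0) : L *ᵥ (Lp *ᵥ x) = x := by
  obtain ⟨hLPL, -, hP, -⟩ := h
  -- `P` is the orthogonal projection onto the range of `L`, and `x - P x` is a vector of `ker L`
  -- orthogonal to itself.
  set P := L * Lp
  have hLP : L * P = L := by
    simpa only [transpose_mul, hL, hP] using congrArg transpose hLPL
  have hPP : P * P = P := by rw [← Matrix.mul_assoc, hLPL]
  set v := x - P *ᵥ x
  have hLv : L *ᵥ v = 0 := by rw [mulVec_sub, mulVec_mulVec, hLP, sub_self]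
  have hPv : P *ᵥ v = 0 := by rw [mulVec_sub, mulVec_mulVec, hPP, sub_self]
  have hvv : v ⬝ᵥ v = 0 := by
    rw [sub_dotProduct, hx v hLv, ← vecMul_transpose, hP, ← dotProduct_mulVec, hPv,
      dotProduct_zero, sub_zero]
  rw [mulVec_mulVec]
  exact (sub_eq_zero.mp (dotProduct_self_eq_zero.mp hvv)).symm

theorem stmt_16_general {n : ℕ} (Lplus Ldag : Matrix (Fin n) (Fin n) ℝ)
    (hLplus : Lplus.PosSemidef)
    (hker : ∀ x : Fin n → ℝ, Lplus *ᵥ x = 0 → ∃ c : ℝ, x = fun _ => c)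
    (hLdag : IsMoorePenrose Lplus Ldag)
    (i j : Fin n) (hij : i ≠ j)
    (e : Fin n → ℝ) (he : e = Pi.single i (1 : ℝ) - Pi.single j 1)
    (r : ℝ) (hr : r = e ⬝ᵥ (Ldag *ᵥ e))
    (w : ℝ) :
    (Lplus - w • vecMulVec e e).PosSemidef ↔ w ≤ 1 / r := by
  have he_ker (z : Fin n → ℝ) (hz : Lplus *ᵥ z = 0) : e ⬝ᵥ z = 0 := by
    obtain ⟨c, rfl⟩ := hker z hz
    simp [he]
  have hLy : Lplus *ᵥ (Ldag *ᵥ e) = e :=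
    hLdag.mulVec_mulVec_eq_of_orthogonal_ker hLplus.isHermitian he_ker
  have he0 : e ≠ 0 := fun h ↦ by simpa [he, hij] using congrFun h i
  have key := hLplus.sub_smul_vecMulVec_mulVec_iff (hLy ▸ he0) w
  rwa [hLy, dotProduct_comm, ← hr] at key

/-- Single negative edge case: for a connected-graph PSD Laplacian `L₊` (kernel spanned
by `𝟙`), distinct vertices `i ≠ j`, `e = e_i − e_j`, and effective resistance
`r = eᵀL₊†e`, the signed Laplacian `L₊ − w e eᵀ` is PSD iff `w ≤ 1/r`. -/
theorem stmt_16 {n : ℕ} (Lplus Ldag : Matrix (Fin n) (Fin n) ℝ)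
    (hLplus : Lplus.PosSemidef) (hL1 : Lplus *ᵥ (fun _ => (1 : ℝ)) = 0)
    (hker : ∀ x : Fin n → ℝ, Lplus *ᵥ x = 0 → ∃ c : ℝ, x = fun _ => c)
    (hLdag : IsMoorePenrose Lplus Ldag)
    (i j : Fin n) (hij : i ≠ j)
    (e : Fin n → ℝ) (he : e = Pi.single i (1 : ℝ) - Pi.single j 1)
    (r : ℝ) (hr : r = e ⬝ᵥ (Ldag *ᵥ e))
    (w : ℝ) (hw : 0 < w) :
    (Lplus - w • vecMulVec e e).PosSemidef ↔ w ≤ 1 / r :=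
  stmt_16_general Lplus Ldag hLplus hker hLdag i j hij e he r hr w
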